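/- For every k > 0, the function g_k(p) = (p+k)²/(p(p-1)) - 2k·ln((1-p)/p) - 2·ln(1-p) attains its maximum over (0,1) at p = 1/2, where g_k(1/2) = -4(1/2 + k)² + 2·ln 2; consequently, g_k(p) ≤ 0 for all p ∈ (0,1) if and only if k ≥ √((ln 2)/2) - 1/2. -/

import Mathlib

/-!
The derivative of `g_k` on `(0, 1)` is `2 (1/2 - p) (p + k)² / (p (1 - p))²`, which changes sign
from `+` to `-` at `p = 1/2`; the first-derivative test makes `1/2` the maximiser, and the sign
criterion is the condition `g_k(1/2) ≤ 0` solved for `k`.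
-/

/-- The auxiliary function `g_k(p) = (p+k)²/(p(p-1)) - 2k·ln((1-p)/p) - 2·ln(1-p)`. -/
noncomputable def gAux (k p : ℝ) : ℝ :=
  (p + k) ^ 2 / (p * (p - 1)) - 2 * k * Real.log ((1 - p) / p) - 2 * Real.log (1 - p)

open Set Real

theorem hasDerivAt_gAux (k : ℝ) {p : ℝ} (hp : p ∈ Ioo (0 : ℝ) 1) :
    HasDerivAt (gAux k) (2 * (1 / 2 - p) * (p + k) ^ 2 / (p * (1 - p)) ^ 2) p := by
  obtain ⟨hp0, hp1⟩ := hp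
  have hx := hasDerivAt_id' p
  have hquot := ((hx.add_const k).pow 2).div (hx.mul (hx.sub_const 1))
    (mul_ne_zero hp0.ne' (sub_ne_zero.2 hp1.ne))
  have hlogOdds := ((hx.const_sub 1).div hx hp0.ne').log (div_pos (by linarith) hp0).ne'
  have hlog := (hx.const_sub 1).log (by linarith)
  have hg : HasDerivAt (gAux k) _ p :=
    (hquot.sub (hlogOdds.const_mul (2 * k))).sub (hlog.const_mul 2)
  refine hg.congr_deriv ?_
  have : p - 1 ≠ 0 := by linarith
  have : 1 - p ≠ 0 := by linarith
  simp only [Pi.mul_apply, Pi.div_apply, Pi.pow_apply]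
  field_simp
  ring

theorem isMaxOn_gAux_half (k : ℝ) : IsMaxOn (gAux k) (Ioo 0 1) (1 / 2) := by
  have hsub₀ : Ioo (0 : ℝ) (1 / 2) ⊆ Ioo 0 1 := Ioo_subset_Ioo_right (by norm_num)
  have hsub₁ : Ioo (1 / 2 : ℝ) 1 ⊆ Ioo 0 1 := Ioo_subset_Ioo_left (by norm_num)
  have hdiff : DifferentiableOn ℝ (gAux k) (Ioo 0 1) := fun p hp =>
    (hasDerivAt_gAux k hp).differentiableAt.differentiableWithinAt
  have hcont : ContinuousAt (gAux k) (1 / 2) :=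
    hdiff.continuousOn.continuousAt (Ioo_mem_nhds (by norm_num) (by norm_num))
  refine isMaxOn_Ioo_of_deriv hcont (hdiff.mono hsub₀) (hdiff.mono hsub₁)
    (fun p hp => ?_) (fun p hp => ?_)
  · rw [(hasDerivAt_gAux k (hsub₀ hp)).deriv]
    exact div_nonneg (mul_nonneg (by linarith [hp.2]) (sq_nonneg _)) (sq_nonneg _)
  · rw [(hasDerivAt_gAux k (hsub₁ hp)).deriv]
    exact div_nonpos_of_nonpos_of_nonneg
      (mul_nonpos_of_nonpos_of_nonneg (by linarith [hp.1]) (sq_nonneg _)) (sq_nonneg _)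

theorem gAux_half (k : ℝ) : gAux k (1 / 2) = -4 * (1 / 2 + k) ^ 2 + 2 * log 2 := by
  rw [gAux, show (1 - 1 / 2 : ℝ) = 2⁻¹ by norm_num, one_div, div_self (by norm_num), log_one,
    log_inv]
  ring

/-- For every k > 0, `g_k` attains its maximum over (0,1) at p = 1/2, where
`g_k(1/2) = -4(1/2 + k)² + 2·ln 2`; consequently `g_k(p) ≤ 0` for all p ∈ (0,1) if and
only if `k ≥ √((ln 2)/2) - 1/2`. -/
theorem gAux_max_and_sign (k : ℝ) (hk : 0 < k) :
    (∀ p ∈ Set.Ioo (0 : ℝ) 1, gAux k p ≤ gAux k (1 / 2)) ∧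
    gAux k (1 / 2) = -4 * (1 / 2 + k) ^ 2 + 2 * Real.log 2 ∧
    ((∀ p ∈ Set.Ioo (0 : ℝ) 1, gAux k p ≤ 0) ↔ Real.sqrt (Real.log 2 / 2) - 1 / 2 ≤ k) := by
  have hmax := isMaxOn_iff.1 (isMaxOn_gAux_half k)
  refine ⟨hmax, gAux_half k, ?_⟩
  calc (∀ p ∈ Ioo (0 : ℝ) 1, gAux k p ≤ 0) ↔ gAux k (1 / 2) ≤ 0 :=
        ⟨fun h => h _ ⟨by norm_num, by norm_num⟩, fun h p hp => (hmax p hp).trans h⟩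
    _ ↔ log 2 / 2 ≤ (1 / 2 + k) ^ 2 := by rw [gAux_half]; constructor <;> intro <;> linarith
    _ ↔ √(log 2 / 2) ≤ 1 / 2 + k := (sqrt_le_left (by linarith)).symm
    _ ↔ √(log 2 / 2) - 1 / 2 ≤ k := by constructor <;> intro <;> linarith
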